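/- Let n, j ∈ ℤ₊ and assume that φ is differentiable on (α,β) with φ′ extending to a function on [α,β] belonging to C_φ^{(n+j−2)} whenever n ≥ 2 (no condition is imposed if n = 0 or n = 1). Then there exist functions a_k ∈ C_φ^{(j)}, k = 0, …, n−1, such that for every n-times differentiable function u on (α,β) one has, on (α,β): X^n u = Σ_{k=0}^{n−1} a_k · φ^k · ∂_t^k u + φ^n · ∂_t^n u. -/

import Mathlib

open Real Set Filter Topology

/-- The open interval `(α, β)` of real numbers, where `α β` are extended reals. -/
def EI (α β : EReal) : Set ℝ := {x : ℝ | α < (x : EReal) ∧ (x : EReal) < β}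

/-- `u : ℝ → ℝ` (thought of as a function on `(α, β)`) extends to a continuous
function on `[α, β] ⊆ EReal`. -/
def ContExt (α β : EReal) (u : ℝ → ℝ) : Prop :=
  ∃ g : EReal → ℝ, ContinuousOn g (Set.Icc α β) ∧
    ∀ x : ℝ, x ∈ EI α β → g (x : EReal) = u x

/-- The operator `X u := φ · u′`. -/
noncomputable def Xop (φ u : ℝ → ℝ) : ℝ → ℝ := fun x => φ x * deriv u x

/-- The iterates `X^k u`. -/
noncomputable def Xiter (φ : ℝ → ℝ) : ℕ → (ℝ → ℝ) → (ℝ → ℝ)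
  | 0, u => u
  | n + 1, u => Xop φ (Xiter φ n u)

/-- The space `C_φ^{(n)}`: inductively, `C_φ^{(0)}` consists of the functions having a
continuous extension to `[α, β]`, and `u ∈ C_φ^{(n+1)}` iff `u ∈ C_φ^{(n)}`, `X^n u` is
differentiable on `(α, β)`, and `X^{n+1} u` extends to a continuous function on `[α, β]`. -/
def CN (α β : EReal) (φ : ℝ → ℝ) : ℕ → Set (ℝ → ℝ)
  | 0 => {u | ContExt α β u}
  | n + 1 => {u | u ∈ CN α β φ n ∧
      (∀ x ∈ EI α β, DifferentiableAt ℝ (Xiter φ n u) x) ∧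
      ContExt α β (Xiter φ (n + 1) u)}

/-- The space `C_φ^{(∞)} := ⋂ₙ C_φ^{(n)}`. -/
def Cinf (α β : EReal) (φ : ℝ → ℝ) : Set (ℝ → ℝ) := ⋂ n : ℕ, CN α β φ n

/-- The spaces `C_φ^{(n)}` for `n ∈ ℤ₊ ∪ {∞}`. -/
def CNE (α β : EReal) (φ : ℝ → ℝ) (n : ℕ∞) : Set (ℝ → ℝ) :=
  WithTop.recTopCoe (Cinf α β φ) (fun k => CN α β φ k) n

/-!
Applying `X` to `a φ^k ∂ₜ^k u` gives `(X a + k φ' a) φ^k ∂ₜ^k u + a φ^(k+1) ∂ₜ^(k+1) u`, so the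
coefficients of `X^n` obey a recursion (`XiterCoeff`) and the expansion follows by induction on
`n`. Since `C_φ^{(j)}` is an algebra and `X` maps `C_φ^{(j+1)}` into `C_φ^{(j)}`, each step of the
recursion costs one order of regularity of the coefficients and needs `φ' ∈ C_φ^{(j)}`; the step
from `X^0` to `X^1` is free because both have constant coefficients, whence `φ' ∈ C_φ^{(n+j-2)}`.
-/

noncomputable def XiterCoeff (φ : ℝ → ℝ) : ℕ → ℕ → ℝ → ℝ
  | 0, 0 => fun _ => 1
  | 0, _ + 1 => fun _ => 0
  | m + 1, 0 => Xop φ (XiterCoeff φ m 0)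
  | m + 1, k + 1 => fun x => Xop φ (XiterCoeff φ m (k + 1)) x
      + ((k + 1 : ℕ) : ℝ) * deriv φ x * XiterCoeff φ m (k + 1) x + XiterCoeff φ m k x

section Locality

variable {α β : EReal} {φ u v : ℝ → ℝ}

lemma isOpen_EI : IsOpen (EI α β) :=
  isOpen_Ioo.preimage continuous_coe_real_ereal

lemma eqOn_Xiter (h : EqOn u v (EI α β)) (m : ℕ) :
    EqOn (Xiter φ m u) (Xiter φ m v) (EI α β) := by
  induction m with
  | zero => exact h
  | succ m ih =>
    intro x hx
    exact congrArg (φ x * ·) ((ih.eventuallyEq_of_mem (isOpen_EI.mem_nhds hx)).deriv_eq)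

lemma ContExt.congr (hu : ContExt α β u) (h : EqOn u v (EI α β)) : ContExt α β v := by
  obtain ⟨g, hg, hgu⟩ := hu
  exact ⟨g, hg, fun x hx => (hgu x hx).trans (h hx)⟩

lemma mem_CN_of_eqOn {m : ℕ} (hu : u ∈ CN α β φ m) (h : EqOn u v (EI α β)) :
    v ∈ CN α β φ m := by
  induction m with
  | zero => exact ContExt.congr hu h
  | succ m ih =>
    refine ⟨ih hu.1, fun x hx => ?_, hu.2.2.congr (eqOn_Xiter h (m + 1))⟩
    exact (hu.2.1 x hx).congr_of_eventuallyEq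
      ((eqOn_Xiter h m).eventuallyEq_of_mem (isOpen_EI.mem_nhds hx)).symm

end Locality

section ContExt

variable {α β : EReal} {u v : ℝ → ℝ}

lemma contExt_const (c : ℝ) : ContExt α β (fun _ => c) :=
  ⟨fun _ => c, continuousOn_const, fun _ _ => rfl⟩

lemma ContExt.add (hu : ContExt α β u) (hv : ContExt α β v) :
    ContExt α β (fun x => u x + v x) := by
  obtain ⟨g, hg, hgu⟩ := hu
  obtain ⟨g', hg', hgv⟩ := hv
  exact ⟨fun e => g e + g' e, hg.add hg', fun x hx => by simp only [hgu x hx, hgv x hx]⟩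

lemma ContExt.mul (hu : ContExt α β u) (hv : ContExt α β v) :
    ContExt α β (fun x => u x * v x) := by
  obtain ⟨g, hg, hgu⟩ := hu
  obtain ⟨g', hg', hgv⟩ := hv
  exact ⟨fun e => g e * g' e, hg.mul hg', fun x hx => by simp only [hgu x hx, hgv x hx]⟩

end ContExt

section CN

variable {α β : EReal} {φ u v : ℝ → ℝ}

lemma CN_antitone : Antitone (CN α β φ) :=
  antitone_nat_of_succ_le fun _ _ hu => hu.1

lemma Xiter_succ' (m : ℕ) (u : ℝ → ℝ) : Xiter φ (m + 1) u = Xiter φ m (Xop φ u) := by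
  induction m with
  | zero => rfl
  | succ m ih => exact congrArg (Xop φ) ih

lemma mem_CN_succ_iff' {m : ℕ} :
    u ∈ CN α β φ (m + 1) ↔ u ∈ CN α β φ 1 ∧ Xop φ u ∈ CN α β φ m := by
  induction m with
  | zero => exact ⟨fun h => ⟨h, h.2.2⟩, fun h => h.1⟩
  | succ m ih =>
    change (u ∈ CN α β φ (m + 1) ∧ _ ∧ _) ↔ _ ∧ (Xop φ u ∈ CN α β φ m ∧ _ ∧ _)
    rw [ih, ← Xiter_succ', ← Xiter_succ']
    tauto

lemma differentiableAt_of_mem_CN_succ {m : ℕ} (hu : u ∈ CN α β φ (m + 1)) {x : ℝ}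
    (hx : x ∈ EI α β) : DifferentiableAt ℝ u x :=
  (mem_CN_succ_iff'.mp hu).1.2.1 x hx

lemma Xop_mem_CN {m : ℕ} (hu : u ∈ CN α β φ (m + 1)) : Xop φ u ∈ CN α β φ m :=
  (mem_CN_succ_iff'.mp hu).2

lemma mem_CN_succ_of {m : ℕ} (hu : ContExt α β u)
    (hd : ∀ x ∈ EI α β, DifferentiableAt ℝ u x) (hX : Xop φ u ∈ CN α β φ m) :
    u ∈ CN α β φ (m + 1) :=
  mem_CN_succ_iff'.mpr ⟨⟨hu, hd, CN_antitone (Nat.zero_le m) hX⟩, hX⟩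

lemma Xop_const (c : ℝ) : Xop φ (fun _ => c) = fun _ => 0 := by
  funext x
  simp [Xop]

lemma const_mem_CN (c : ℝ) (m : ℕ) : (fun _ => c) ∈ CN α β φ m := by
  induction m generalizing c with
  | zero => exact contExt_const c
  | succ m ih =>
    refine mem_CN_succ_of (contExt_const c) (fun x _ => differentiableAt_const c) ?_
    rw [Xop_const]
    exact ih 0

lemma add_mem_CN {m : ℕ} (hu : u ∈ CN α β φ m) (hv : v ∈ CN α β φ m) :
    (fun x => u x + v x) ∈ CN α β φ m := by
  induction m generalizing u v with
  | zero => exact hu.add hv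
  | succ m ih =>
    have hd : ∀ x ∈ EI α β, DifferentiableAt ℝ (fun x => u x + v x) x := fun x hx =>
      (differentiableAt_of_mem_CN_succ hu hx).add (differentiableAt_of_mem_CN_succ hv hx)
    have hX : EqOn (fun x => Xop φ u x + Xop φ v x) (Xop φ (fun x => u x + v x)) (EI α β) := by
      intro x hx
      simp only [Xop, deriv_fun_add (differentiableAt_of_mem_CN_succ hu hx)
        (differentiableAt_of_mem_CN_succ hv hx)]
      ring
    exact mem_CN_succ_of ((CN_antitone (Nat.zero_le _) hu).add (CN_antitone (Nat.zero_le _) hv))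
      hd (mem_CN_of_eqOn (ih (Xop_mem_CN hu) (Xop_mem_CN hv)) hX)

lemma mul_mem_CN {m : ℕ} (hu : u ∈ CN α β φ m) (hv : v ∈ CN α β φ m) :
    (fun x => u x * v x) ∈ CN α β φ m := by
  induction m generalizing u v with
  | zero => exact hu.mul hv
  | succ m ih =>
    have hd : ∀ x ∈ EI α β, DifferentiableAt ℝ (fun x => u x * v x) x := fun x hx =>
      (differentiableAt_of_mem_CN_succ hu hx).mul (differentiableAt_of_mem_CN_succ hv hx)
    have hX : EqOn (fun x => Xop φ u x * v x + u x * Xop φ v x) (Xop φ (fun x => u x * v x))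
        (EI α β) := by
      intro x hx
      simp only [Xop, deriv_fun_mul (differentiableAt_of_mem_CN_succ hu hx)
        (differentiableAt_of_mem_CN_succ hv hx)]
      ring
    exact mem_CN_succ_of ((CN_antitone (Nat.zero_le _) hu).mul (CN_antitone (Nat.zero_le _) hv))
      hd (mem_CN_of_eqOn (add_mem_CN (ih (Xop_mem_CN hu) hv.1) (ih hu.1 (Xop_mem_CN hv))) hX)

end CN

section XiterCoeff

variable {α β : EReal} {φ : ℝ → ℝ}

lemma XiterCoeff_of_lt {m k : ℕ} (h : m < k) : XiterCoeff φ m k = fun _ => 0 := by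
  induction m generalizing k with
  | zero => obtain ⟨k, rfl⟩ := Nat.exists_eq_add_of_lt h; rfl
  | succ m ih =>
    obtain ⟨k, rfl⟩ := Nat.exists_eq_add_of_lt (Nat.zero_lt_of_lt h)
    funext x
    simp [XiterCoeff, ih (k := k + 1) (by omega), ih (k := k) (by omega), Xop_const]

lemma XiterCoeff_self (m : ℕ) : XiterCoeff φ m m = fun _ => 1 := by
  induction m with
  | zero => rfl
  | succ m ih =>
    funext x
    simp [XiterCoeff, XiterCoeff_of_lt (Nat.lt_succ_self m), ih, Xop_const]

lemma XiterCoeff_succ_mem_CN {m j : ℕ} (hφ' : deriv φ ∈ CN α β φ j)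
    (ha : ∀ k, XiterCoeff φ m k ∈ CN α β φ (j + 1)) (k : ℕ) :
    XiterCoeff φ (m + 1) k ∈ CN α β φ j := by
  cases k with
  | zero => exact Xop_mem_CN (ha 0)
  | succ k =>
    refine add_mem_CN (add_mem_CN (Xop_mem_CN (ha (k + 1))) ?_) (CN_antitone j.le_succ (ha k))
    exact mul_mem_CN (mul_mem_CN (const_mem_CN _ j) hφ') (CN_antitone j.le_succ (ha (k + 1)))

lemma XiterCoeff_mem_CN : ∀ {m j : ℕ}, (2 ≤ m → deriv φ ∈ CN α β φ (m + j - 2)) →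
    ∀ k, XiterCoeff φ m k ∈ CN α β φ j
  | 0, j, _, 0 => const_mem_CN 1 j
  | 0, j, _, _ + 1 => const_mem_CN 0 j
  | 1, j, _, 0 => by
    rw [XiterCoeff, XiterCoeff, Xop_const]
    exact const_mem_CN 0 j
  | 1, j, _, k + 1 => by
    have h : XiterCoeff φ 1 (k + 1) = XiterCoeff φ 0 k := by
      funext x
      simp [XiterCoeff, Xop_const]
    rw [h]
    exact XiterCoeff_mem_CN (by omega) k
  | m + 2, j, hφ', k => by
    refine XiterCoeff_succ_mem_CN (CN_antitone (by omega) (hφ' le_add_self)) ?_ k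
    exact XiterCoeff_mem_CN fun _ => by convert hφ' le_add_self using 2; omega

end XiterCoeff

section Expansion

variable {α β : EReal} {φ u : ℝ → ℝ}

open Finset

lemma Xop_eq_sum_of_eventuallyEq {f : ℝ → ℝ} {a : ℕ → ℝ → ℝ} {s : Finset ℕ} {x : ℝ}
    (hf : f =ᶠ[𝓝 x] fun y => ∑ k ∈ s, a k y * φ y ^ k * iteratedDeriv k u y)
    (ha : ∀ k ∈ s, DifferentiableAt ℝ (a k) x) (hφ : DifferentiableAt ℝ φ x)
    (hu : ∀ k ∈ s, DifferentiableAt ℝ (iteratedDeriv k u) x) :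
    Xop φ f x = ∑ k ∈ s, ((Xop φ (a k) x + k * deriv φ x * a k x) * φ x ^ k * iteratedDeriv k u x
      + a k x * φ x ^ (k + 1) * iteratedDeriv (k + 1) u x) := by
  have hterm : ∀ k ∈ s, HasDerivAt (fun y => a k y * φ y ^ k * iteratedDeriv k u y)
      ((deriv (a k) x * φ x ^ k + a k x * (k * φ x ^ (k - 1) * deriv φ x)) * iteratedDeriv k u x
        + a k x * φ x ^ k * iteratedDeriv (k + 1) u x) x := fun k hk => by
    rw [iteratedDeriv_succ]
    exact ((ha k hk).hasDerivAt.mul (hφ.hasDerivAt.pow k)).mul (hu k hk).hasDerivAt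
  rw [Xop, hf.deriv_eq, (HasDerivAt.fun_sum hterm).deriv, mul_sum]
  refine sum_congr rfl fun k _ => ?_
  rcases k with _ | k
  · simp only [Xop]
    ring
  · simp only [Xop, Nat.add_sub_cancel, pow_succ]
    ring

lemma sum_XiterCoeff_succ_mul (m : ℕ) (x : ℝ) (c : ℕ → ℝ) :
    ∑ k ∈ range (m + 2), XiterCoeff φ (m + 1) k x * c k
      = ∑ k ∈ range (m + 1), ((Xop φ (XiterCoeff φ m k) x
          + k * deriv φ x * XiterCoeff φ m k x) * c k + XiterCoeff φ m k x * c (k + 1)) := by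
  set b : ℕ → ℝ := fun k => (Xop φ (XiterCoeff φ m k) x + k * deriv φ x * XiterCoeff φ m k x) * c k
  have hb : ∑ k ∈ range (m + 1), b k = ∑ k ∈ range (m + 1), b (k + 1) + b 0 := by
    have hlast : b (m + 1) = 0 := by simp [b, XiterCoeff_of_lt (Nat.lt_succ_self m), Xop_const]
    rw [← sum_range_succ' b (m + 1), sum_range_succ b (m + 1), hlast, add_zero]
  rw [sum_add_distrib, hb, sum_range_succ', ← add_rotate, ← sum_add_distrib]
  simp only [b, XiterCoeff]
  congr 1
  · refine sum_congr rfl fun k _ => ?_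
    ring
  · simp

lemma Xiter_eq_sum_XiterCoeff {m : ℕ} (hφ : 2 ≤ m → ∀ x ∈ EI α β, DifferentiableAt ℝ φ x)
    (hA : ∀ i < m, ∀ k, ∀ x ∈ EI α β, DifferentiableAt ℝ (XiterCoeff φ i k) x)
    (hu : ∀ k < m, ∀ x ∈ EI α β, DifferentiableAt ℝ (iteratedDeriv k u) x) :
    ∀ x ∈ EI α β,
      Xiter φ m u x = ∑ k ∈ range (m + 1), XiterCoeff φ m k x * φ x ^ k * iteratedDeriv k u x := by
  induction m with
  | zero => simp [Xiter, XiterCoeff]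
  | succ m ih =>
    rcases m with _ | m
    · simp [Xiter, Xop, XiterCoeff, sum_range_succ]
    intro x hx
    have hsum : Xiter φ (m + 1) u =ᶠ[𝓝 x] fun y => ∑ k ∈ range (m + 2),
        XiterCoeff φ (m + 1) k y * φ y ^ k * iteratedDeriv k u y :=
      Set.EqOn.eventuallyEq_of_mem
        (ih (fun h => hφ (by omega)) (fun i hi => hA i (by omega)) (fun k hk => hu k (by omega)))
        (isOpen_EI.mem_nhds hx)
    rw [Xiter, Xop_eq_sum_of_eventuallyEq hsum (fun k _ => hA (m + 1) (by omega) k x hx)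
      (hφ (by omega) x hx) (fun k hk => hu k (Finset.mem_range.mp hk) x hx)]
    simp_rw [mul_assoc (XiterCoeff φ (m + 2) _ x), sum_XiterCoeff_succ_mul]
    refine sum_congr rfl fun k _ => ?_
    ring

end Expansion

theorem Xiter_expansion_general (α β : EReal) (φ : ℝ → ℝ)
    (n j : ℕ)
    (hφ' : 2 ≤ n → (∀ x ∈ EI α β, DifferentiableAt ℝ φ x) ∧
      deriv φ ∈ CN α β φ (n + j - 2)) :
    ∃ a : ℕ → (ℝ → ℝ), (∀ k < n, a k ∈ CN α β φ j) ∧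
      ∀ u : ℝ → ℝ,
        (∀ k < n, ∀ x ∈ EI α β, DifferentiableAt ℝ (iteratedDeriv k u) x) →
        ∀ x ∈ EI α β,
          Xiter φ n u x =
            (∑ k ∈ Finset.range n, a k x * φ x ^ k * iteratedDeriv k u x)
              + φ x ^ n * iteratedDeriv n u x := by
  refine ⟨XiterCoeff φ n, fun k _ => XiterCoeff_mem_CN (fun h => (hφ' h).2) k, ?_⟩
  intro u hu x hx
  have hA : ∀ i < n, ∀ k, ∀ y ∈ EI α β, DifferentiableAt ℝ (XiterCoeff φ i k) y :=
    fun i hi k y hy => differentiableAt_of_mem_CN_succ (m := 0)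
      (XiterCoeff_mem_CN (fun h => CN_antitone (by omega) (hφ' (by omega)).2) k) hy
  rw [Xiter_eq_sum_XiterCoeff (fun h => (hφ' h).1) hA hu x hx, Finset.sum_range_succ,
    XiterCoeff_self, one_mul]

/-- if `φ′` extends to a function on `[α,β]` belonging to `C_φ^{(n+j−2)}`
whenever `n ≥ 2`, then there exist `a_k ∈ C_φ^{(j)}`, `k = 0, …, n−1`, such that on
`(α,β)`, for every `n`-times differentiable `u`,
`X^n u = Σ_{k=0}^{n−1} a_k φ^k ∂_t^k u + φ^n ∂_t^n u`. -/
theorem Xiter_expansion (α β : EReal) (hαβ : α < β) (φ : ℝ → ℝ)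
    (hφc : ContinuousOn φ (EI α β)) (hφpos : ∀ x ∈ EI α β, 0 < φ x)
    (n j : ℕ)
    (hφ' : 2 ≤ n → (∀ x ∈ EI α β, DifferentiableAt ℝ φ x) ∧
      deriv φ ∈ CN α β φ (n + j - 2)) :
    ∃ a : ℕ → (ℝ → ℝ), (∀ k < n, a k ∈ CN α β φ j) ∧
      ∀ u : ℝ → ℝ,
        (∀ k < n, ∀ x ∈ EI α β, DifferentiableAt ℝ (iteratedDeriv k u) x) →
        ∀ x ∈ EI α β,
          Xiter φ n u x =
            (∑ k ∈ Finset.range n, a k x * φ x ^ k * iteratedDeriv k u x)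
              + φ x ^ n * iteratedDeriv n u x :=
  Xiter_expansion_general α β φ n j hφ'
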